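/- The cubic u3(x) = −150√6·(568552997 + 66091829356x + 136570772x^2) + 208899235967 + 24283711656924x + 50114778876x^2 + 45812608x^3 has exactly three real roots τ1 < τ2 < τ3, all lying in the open interval (0, 1); setting z1 = −√τ3, z3 = −√τ1, z5 = √τ2, the septic normalized proper Zolotarev polynomial Z at parameter t = −21 satisfies Z(z1) = Z(z3) = Z(z5) = 1 and Z'(z1) = Z'(z3) = Z'(z5) = 0. -/

import Mathlib

/-!
Let `q = √((1975950√6 − 4839903)/2272)`. The odd coefficients of `Z` lie in `ℚ(√6)·q`, and with
`W(y) = y³ + q y² + e y − k q`, `e = (60000√6 − 147159)/284`, `k = 207229/225354 − (25000/112677)√6`,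
one has `Z − 1 = b₇ (y − c q) W(y)²` for `c = (3425 + 1568√6)/1587`. So at each root of `W` the
polynomial `Z − 1` has a double zero: `Z = 1` and `Z' = 0` there. Moreover
`u₃(y²) = −45812608 W(y) W(−y)`, so the squares of the roots of `W` are roots of `u₃`.
Sign changes locate three roots of `W`, near `−0.891`, `−0.148` and `0.769`; their squares are
three distinct roots of the cubic `u₃`, hence all of them, and the `z`'s are these roots of `W`.
-/

noncomputable section

def b0 : ℝ := (5236829509 - 598896224 * Real.sqrt 6) / 6591796875

def b1 : ℝ :=
  -(16 / 6591796875) * Real.sqrt (2 * (1174132032293998751 + 484070220858892414 * Real.sqrt 6))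

def b2 : ℝ := -(8 / 2197265625) * (1876889773 + 537098572 * Real.sqrt 6)

def b3 : ℝ :=
  (16 / 6591796875) * Real.sqrt (2 * (56229826406521238759 + 22960487256932311726 * Real.sqrt 6))

def b4 : ℝ := (8 / 6591796875) * (13748181869 + 5603740016 * Real.sqrt 6)

def b5 : ℝ :=
  -(32 / 2197265625) * Real.sqrt (2 * (4907729982259476719 + 2003572376153817166 * Real.sqrt 6))

def b6 : ℝ := -(256 / 6591796875) * (299877839 + 122424446 * Real.sqrt 6)

def b7 : ℝ :=
  (1024 / 6591796875) * Real.sqrt (2 * (11553696783009431 + 4716776960201434 * Real.sqrt 6))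

/-- The septic normalized proper Zolotarev polynomial at parameter t = −21. -/
def Z (x : ℝ) : ℝ :=
  b0 + b1 * x + b2 * x ^ 2 + b3 * x ^ 3 + b4 * x ^ 4 + b5 * x ^ 5 + b6 * x ^ 6 + b7 * x ^ 7

/-- The cubic u₃(x). -/
def u3 (x : ℝ) : ℝ :=
  -150 * Real.sqrt 6 * (568552997 + 66091829356 * x + 136570772 * x ^ 2) +
    208899235967 + 24283711656924 * x + 50114778876 * x ^ 2 + 45812608 * x ^ 3

open Real Set

theorem eq_or_eq_or_eq_of_cubic_eq_zero {K : Type*} [Field K] {f : K → K} {a b c d : K}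
    (hf : ∀ x, f x = a * x ^ 3 + b * x ^ 2 + c * x + d) (ha : a ≠ 0) {t₁ t₂ t₃ : K}
    (h₁₂ : t₁ ≠ t₂) (h₁₃ : t₁ ≠ t₃) (h₂₃ : t₂ ≠ t₃) (h₁ : f t₁ = 0) (h₂ : f t₂ = 0) (h₃ : f t₃ = 0)
    {x : K} (hx : f x = 0) : x = t₁ ∨ x = t₂ ∨ x = t₃ := by
  rw [hf] at h₁ h₂ h₃ hx
  grind

theorem deriv_const_add_mul_sq_eq_zero {𝕜 : Type*} [NontriviallyNormedField 𝕜] {g h : 𝕜 → 𝕜}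
    {y : 𝕜} (a : 𝕜) (hg : DifferentiableAt 𝕜 g y) (hh : DifferentiableAt 𝕜 h y) (hy : h y = 0) :
    deriv (fun x => a + g x * h x ^ 2) y = 0 := by
  simpa [hy] using ((hg.hasDerivAt.mul (hh.hasDerivAt.pow 2)).const_add a).deriv

theorem sqrt_eq_mul_sqrt {x y r : ℝ} (hr : 0 ≤ r) (h : x = r ^ 2 * y) : √x = r * √y := by
  rw [h, sqrt_mul (sq_nonneg r), sqrt_sq hr]

namespace ZolotarevSeptic

theorem sq_sqrt_six : √6 ^ 2 = (6 : ℝ) := sq_sqrt (by norm_num)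

theorem sqrt_six_bounds : (2449489742 / 10 ^ 9 : ℝ) < √6 ∧ √6 < 2449489743 / 10 ^ 9 :=
  ⟨(lt_sqrt (by norm_num)).2 (by norm_num), (sqrt_lt' (by norm_num)).2 (by norm_num)⟩

def q : ℝ := √((1975950 * √6 - 4839903) / 2272)

theorem q_sq : q ^ 2 = (1975950 * √6 - 4839903) / 2272 :=
  sq_sqrt (by linarith [sqrt_six_bounds.1])

theorem q_bounds : (2705 / 10000 : ℝ) < q ∧ q < 2706 / 10000 := by
  obtain ⟨hl, hu⟩ := sqrt_six_bounds
  exact ⟨(lt_sqrt (by norm_num)).2 (by linarith), (sqrt_lt' (by norm_num)).2 (by linarith)⟩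

def W (y : ℝ) : ℝ :=
  y ^ 3 + q * y ^ 2 + (60000 * √6 - 147159) / 284 * y - (207229 / 225354 - 25000 / 112677 * √6) * q

theorem differentiable_W : Differentiable ℝ W := by
  unfold W; fun_prop

theorem b1_eq : b1 = -(16 / 6591796875) * ((6374480198312 + 2600859236368 * √6) / 1587 * q) := by
  unfold b1 q
  congr 1
  exact sqrt_eq_mul_sqrt (by positivity) (by grind [sq_sqrt_six])

theorem b3_eq : b3 = (16 / 6591796875) * ((43996180782136 + 17959850368304 * √6) / 1587 * q) := by
  unfold b3 q
  congr 1
  exact sqrt_eq_mul_sqrt (by positivity) (by grind [sq_sqrt_six])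

theorem b5_eq : b5 = -(32 / 2197265625) * ((12996641724056 + 5305856129584 * √6) / 1587 * q) := by
  unfold b5 q
  congr 1
  exact sqrt_eq_mul_sqrt (by positivity) (by grind [sq_sqrt_six])

theorem b7_eq : b7 = (1024 / 6591796875) * ((630596090008 + 257439775712 * √6) / 1587 * q) := by
  unfold b7 q
  congr 1
  exact sqrt_eq_mul_sqrt (by positivity) (by grind [sq_sqrt_six])

theorem Z_eq (y : ℝ) : Z y = 1 + b7 * (y - (3425 + 1568 * √6) / 1587 * q) * W y ^ 2 := by
  have hq := q_sq
  have hs := sq_sqrt_six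
  unfold Z b0 b2 b4 b6 W
  rw [b1_eq, b3_eq, b5_eq, b7_eq]
  grind

theorem u3_sq (y : ℝ) : u3 (y ^ 2) = -45812608 * (W y * W (-y)) := by
  have hq := q_sq
  have hs := sq_sqrt_six
  unfold u3 W
  grind

theorem u3_eq_cubic (x : ℝ) :
    u3 x = 45812608 * x ^ 3 + (50114778876 - 20485615800 * √6) * x ^ 2 +
      (24283711656924 - 9913774403400 * √6) * x + (208899235967 - 85282949550 * √6) := by
  unfold u3; ring

theorem Z_eq_one_of_W_eq_zero {y : ℝ} (hy : W y = 0) : Z y = 1 := by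
  rw [Z_eq, hy]; ring

theorem deriv_Z_eq_zero_of_W_eq_zero {y : ℝ} (hy : W y = 0) : deriv Z y = 0 := by
  rw [show Z = fun x => 1 + b7 * (x - (3425 + 1568 * √6) / 1587 * q) * W x ^ 2 from funext Z_eq]
  exact deriv_const_add_mul_sq_eq_zero 1 (by fun_prop) differentiable_W.differentiableAt hy

theorem W_signs : W (-9 / 10) < 0 ∧ 0 < W (-89 / 100) ∧ 0 < W (-3 / 20) ∧ W (-7 / 50) < 0 ∧
    W (19 / 25) < 0 ∧ 0 < W (77 / 100) := by
  obtain ⟨hsl, hsu⟩ := sqrt_six_bounds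
  obtain ⟨hql, hqu⟩ := q_bounds
  have hprod := mul_pos (sub_pos.2 hsl) (sub_pos.2 hql)
  unfold W
  refine ⟨?_, ?_, ?_, ?_, ?_, ?_⟩ <;> nlinarith

theorem exists_roots_W : ∃ w₁ w₂ w₃ : ℝ,
    w₁ ∈ Ioo (-9 / 10) (-89 / 100) ∧ w₂ ∈ Ioo (-3 / 20) (-7 / 50) ∧ w₃ ∈ Ioo (19 / 25) (77 / 100) ∧
      W w₁ = 0 ∧ W w₂ = 0 ∧ W w₃ = 0 := by
  obtain ⟨h₁, h₂, h₃, h₄, h₅, h₆⟩ := W_signs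
  have hW : Continuous W := differentiable_W.continuous
  obtain ⟨w₁, hw₁, hW₁⟩ := intermediate_value_Ioo (by norm_num) hW.continuousOn ⟨h₁, h₂⟩
  obtain ⟨w₂, hw₂, hW₂⟩ := intermediate_value_Ioo' (by norm_num) hW.continuousOn ⟨h₄, h₃⟩
  obtain ⟨w₃, hw₃, hW₃⟩ := intermediate_value_Ioo (by norm_num) hW.continuousOn ⟨h₅, h₆⟩
  exact ⟨w₁, w₂, w₃, hw₁, hw₂, hw₃, hW₁, hW₂, hW₃⟩

end ZolotarevSeptic

open ZolotarevSeptic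

/-- the cubic u₃ has exactly three real roots τ₁ < τ₂ < τ₃, all in (0, 1);
with z₁ = −√τ₃, z₃ = −√τ₁, z₅ = √τ₂ one has Z(z₁) = Z(z₃) = Z(z₅) = 1 and
Z′(z₁) = Z′(z₃) = Z′(z₅) = 0. -/
theorem stmt13 :
    ∃ τ1 τ2 τ3 : ℝ,
      τ1 < τ2 ∧ τ2 < τ3 ∧
      u3 τ1 = 0 ∧ u3 τ2 = 0 ∧ u3 τ3 = 0 ∧
      (∀ x : ℝ, u3 x = 0 → x = τ1 ∨ x = τ2 ∨ x = τ3) ∧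
      τ1 ∈ Set.Ioo (0 : ℝ) 1 ∧ τ2 ∈ Set.Ioo (0 : ℝ) 1 ∧ τ3 ∈ Set.Ioo (0 : ℝ) 1 ∧
      Z (-Real.sqrt τ3) = 1 ∧ Z (-Real.sqrt τ1) = 1 ∧ Z (Real.sqrt τ2) = 1 ∧
      deriv Z (-Real.sqrt τ3) = 0 ∧ deriv Z (-Real.sqrt τ1) = 0 ∧
      deriv Z (Real.sqrt τ2) = 0 := by
  obtain ⟨w₁, w₂, w₃, ⟨h₁l, h₁u⟩, ⟨h₂l, h₂u⟩, ⟨h₃l, h₃u⟩, hW₁, hW₂, hW₃⟩ := exists_roots_W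
  have hu3 {w : ℝ} (hw : W w = 0) : u3 (w ^ 2) = 0 := by rw [u3_sq, hw, zero_mul, mul_zero]
  have h₁₂ : w₂ ^ 2 < w₃ ^ 2 := by nlinarith
  have h₂₃ : w₃ ^ 2 < w₁ ^ 2 := by nlinarith
  have hz₁ : -√(w₁ ^ 2) = w₁ := by rw [sqrt_sq_eq_abs, abs_of_neg (by linarith), neg_neg]
  have hz₃ : -√(w₂ ^ 2) = w₂ := by rw [sqrt_sq_eq_abs, abs_of_neg (by linarith), neg_neg]
  have hz₅ : √(w₃ ^ 2) = w₃ := sqrt_sq (by linarith)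
  refine ⟨w₂ ^ 2, w₃ ^ 2, w₁ ^ 2, h₁₂, h₂₃, hu3 hW₂, hu3 hW₃, hu3 hW₁, fun x hx => ?_,
    ⟨by nlinarith, by nlinarith⟩, ⟨by nlinarith, by nlinarith⟩, ⟨by nlinarith, by nlinarith⟩, ?_⟩
  · exact eq_or_eq_or_eq_of_cubic_eq_zero u3_eq_cubic (by norm_num) h₁₂.ne (h₁₂.trans h₂₃).ne
      h₂₃.ne (hu3 hW₂) (hu3 hW₃) (hu3 hW₁) hx
  · rw [hz₁, hz₃, hz₅]
    exact ⟨Z_eq_one_of_W_eq_zero hW₁, Z_eq_one_of_W_eq_zero hW₂, Z_eq_one_of_W_eq_zero hW₃,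
      deriv_Z_eq_zero_of_W_eq_zero hW₁, deriv_Z_eq_zero_of_W_eq_zero hW₂,
      deriv_Z_eq_zero_of_W_eq_zero hW₃⟩
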